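/- Consider the dual-criticality task system consisting of the HC task τ1 with T_1 = 6, D_1 = 4, C_1^L = 1, C_1^H = 2 and the LC task τ2 with T_2 = 7, D_2 = 5, C_2^L = C_2^H = 1, with tightened deadlines equal to the real deadlines (D_1^L = 4 and D_2^L = 5). Then: (i) the existing test fails at t = 1, since E(1) = 2 > 1 (τ1 ∈ S(1) with CO_1(1) = 1 and C_1^H − C_1^L = 1, while dbf_1^H(1) = 0); and (ii) the improved test holds everywhere: I(t1,t2) ≤ t2 for all reals 0 ≤ t1 < t2. Hence the improved demand-based test strictly dominates the existing demand-based test. -/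

import Mathlib

open scoped Classical
open Finset

namespace MC

/-- `MOD t T = t - ⌊t/T⌋·T`. -/
noncomputable def MOD (t T : ℝ) : ℝ := t - (⌊t / T⌋ : ℝ) * T

/-- A dual-criticality sporadic task: minimum separation `T > 0`, low-criticality WCET
`CL` and high-criticality WCET `CH` with `0 < CL ≤ CH`, real deadline `D` and tightened
deadline `DL` with `CL ≤ DL ≤ D ≤ T`. -/
structure Task where
  T : ℝ
  D : ℝ
  DL : ℝ
  CL : ℝ
  CH : ℝ
  hT : 0 < T
  hCL : 0 < CL
  hCLCH : CL ≤ CH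
  hCLDL : CL ≤ DL
  hDLD : DL ≤ D
  hDT : D ≤ T

/-- Low-criticality demand bound function `dbf^L(t)`. -/
noncomputable def dbfL (τ : Task) (t : ℝ) : ℝ :=
  max 0 (((⌊(t - τ.DL) / τ.T⌋ : ℝ) + 1) * τ.CL)

/-- High-criticality demand bound function `dbf^H(t)`. -/
noncomputable def dbfH (τ : Task) (t : ℝ) : ℝ :=
  max 0 (((⌊(t - τ.D) / τ.T⌋ : ℝ) + 1) * τ.CH)

/-- Two-parameter low-criticality demand bound `dbf^L(t1, t2)`. -/
noncomputable def dbfL2 (τ : Task) (t1 t2 : ℝ) : ℝ :=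
  max 0 ((⌊(t2 - τ.D) / τ.T⌋ : ℝ) - (⌊(t2 - t1 - τ.D) / τ.T⌋ : ℝ) - 1) * τ.CL

/-- Unnecessary-job demand bound `dbf^{UN}(t1, t2)`. -/
noncomputable def dbfUN (τ : Task) (t1 t2 : ℝ) : ℝ :=
  if MOD t1 τ.T < τ.DL ∧ (⌊t1 / τ.T⌋ : ℝ) * τ.T + τ.DL ≤ t2 then
    min τ.CL (MOD t1 τ.T)
  else 0

/-- Maximum carry-over execution `CO(t)` pending at the start of an interval of length `t`. -/
noncomputable def CO (τ : Task) (t : ℝ) : ℝ :=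
  min τ.CL (MOD t τ.T - (τ.D - τ.DL))

/-- A release set for a task: a finite set of nonnegative reals, any two distinct
elements of which differ by at least the minimum separation `T`. -/
def ReleaseSet (τ : Task) (R : Finset ℝ) : Prop :=
  (∀ x ∈ R, 0 ≤ x) ∧ ∀ x ∈ R, ∀ y ∈ R, x ≠ y → τ.T ≤ |x - y|

/-- Case 1: `t2 - t1 ≤ D - D^L`; no job of the task executes after the switch. -/
def case1 (τ : Task) (t1 t2 : ℝ) : Prop := t2 - t1 ≤ τ.D - τ.DL

/-- Case 2: the carry-over job contributes demand after the switch. -/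
def case2 (τ : Task) (t1 t2 : ℝ) : Prop :=
  τ.D - τ.DL < MOD (t2 - t1) τ.T ∧ MOD (t2 - t1) τ.T < τ.D ∧
    (⌊(t2 - t1) / τ.T⌋ : ℝ) * τ.T + τ.D ≤ t2

/-- Case 3: neither case 1 nor case 2. -/
def case3 (τ : Task) (t1 t2 : ℝ) : Prop := ¬ case1 τ t1 t2 ∧ ¬ case2 τ t1 t2

/-- Set `S(t)` of HC tasks whose carry-over job contributes demand in an interval of
length `t` (existing test). -/
noncomputable def Sset {n : ℕ} (τ : Fin n → Task) (hc : Fin n → Bool) (t : ℝ) :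
    Finset (Fin n) :=
  univ.filter fun i =>
    hc i = true ∧ (τ i).D - (τ i).DL < MOD t (τ i).T ∧ MOD t (τ i).T < (τ i).D

/-- The existing-test bound `E(t)` (Proposition 3, from Ekberg and Yi). -/
noncomputable def Etest {n : ℕ} (τ : Fin n → Task) (hc : Fin n → Bool) (t : ℝ) : ℝ :=
  ∑ i ∈ univ.filter (fun i => hc i = true), dbfH (τ i) t +
    ∑ i ∈ Sset τ hc t, (((τ i).CH - (τ i).CL) + CO (τ i) t)

/-- `U`: the set of LC tasks together with HC tasks in case 1. -/
noncomputable def Uset {n : ℕ} (τ : Fin n → Task) (hc : Fin n → Bool) (t1 t2 : ℝ) :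
    Finset (Fin n) :=
  univ.filter fun i => hc i = false ∨ case1 (τ i) t1 t2

/-- HC tasks in case 2. -/
noncomputable def H2set {n : ℕ} (τ : Fin n → Task) (hc : Fin n → Bool) (t1 t2 : ℝ) :
    Finset (Fin n) :=
  univ.filter fun i => hc i = true ∧ case2 (τ i) t1 t2

/-- HC tasks in case 3. -/
noncomputable def H3set {n : ℕ} (τ : Fin n → Task) (hc : Fin n → Bool) (t1 t2 : ℝ) :
    Finset (Fin n) :=
  univ.filter fun i => hc i = true ∧ case3 (τ i) t1 t2

/-- The new-test bound `N(t1,t2)` of Theorem 1. -/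
noncomputable def Ntest {n : ℕ} (τ : Fin n → Task) (hc : Fin n → Bool) (t1 t2 : ℝ) : ℝ :=
  ∑ i ∈ Uset τ hc t1 t2, (dbfL (τ i) t1 + dbfUN (τ i) t1 t2) +
    ∑ i ∈ H2set τ hc t1 t2, (dbfL2 (τ i) t1 t2 + dbfH (τ i) (t2 - t1) + (τ i).CH) +
    ∑ i ∈ H3set τ hc t1 t2, (dbfL2 (τ i) t1 t2 + dbfH (τ i) (t2 - t1) + (τ i).CL)

/-- Collective bound `dbf_{UN}(t1,t2)` on the demand of all unnecessary jobs (Lemma 5). -/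
noncomputable def dbfUNtot {n : ℕ} (τ : Fin n → Task) (hc : Fin n → Bool) (t1 t2 : ℝ) : ℝ :=
  if h : (Uset τ hc t1 t2).Nonempty then
    min ((Uset τ hc t1 t2).sup' h fun i => (τ i).DL)
      (∑ i ∈ Uset τ hc t1 t2, dbfUN (τ i) t1 t2)
  else 0

/-- `dbf_{L1}(t1,t2)` (Lemma 7). -/
noncomputable def dbfL1tot {n : ℕ} (τ : Fin n → Task) (hc : Fin n → Bool) (t1 t2 : ℝ) : ℝ :=
  dbfUNtot τ hc t1 t2 + ∑ i ∈ Uset τ hc t1 t2, dbfL (τ i) t1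

/-- `dbf_{L2}(t1,t2)` (Lemma 8). -/
noncomputable def dbfL2tot {n : ℕ} (τ : Fin n → Task) (hc : Fin n → Bool) (t1 t2 : ℝ) : ℝ :=
  ∑ i ∈ H2set τ hc t1 t2, (dbfL2 (τ i) t1 t2 + (τ i).CL - CO (τ i) (t2 - t1))

/-- `dbf_{L3}(t1,t2)` (Lemma 9). -/
noncomputable def dbfL3tot {n : ℕ} (τ : Fin n → Task) (hc : Fin n → Bool) (t1 t2 : ℝ) : ℝ :=
  ∑ i ∈ H3set τ hc t1 t2, (dbfL2 (τ i) t1 t2 + (τ i).CL)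

/-- The improved-test bound `I(t1,t2)` of Theorem 2. -/
noncomputable def Itest {n : ℕ} (τ : Fin n → Task) (hc : Fin n → Bool) (t1 t2 : ℝ) : ℝ :=
  min t1 (dbfL1tot τ hc t1 t2 + dbfL2tot τ hc t1 t2 + dbfL3tot τ hc t1 t2) +
    (∑ i ∈ H2set τ hc t1 t2, dbfH (τ i) (t2 - t1) +
      ∑ i ∈ H3set τ hc t1 t2, dbfH (τ i) (t2 - t1)) +
    ∑ i ∈ H2set τ hc t1 t2, (CO (τ i) (t2 - t1) + (τ i).CH - (τ i).CL)


/-- The HC task `τ1 = (T=6, D=4, D^L=4, C^L=1, C^H=2)` of the example. -/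
noncomputable def exTask1 : Task :=
  { T := 6, D := 4, DL := 4, CL := 1, CH := 2
    hT := by norm_num, hCL := by norm_num, hCLCH := by norm_num
    hCLDL := by norm_num, hDLD := by norm_num, hDT := by norm_num }

/-- The LC task `τ2 = (T=7, D=5, D^L=5, C^L=C^H=1)` of the example. -/
noncomputable def exTask2 : Task :=
  { T := 7, D := 5, DL := 5, CL := 1, CH := 1
    hT := by norm_num, hCL := by norm_num, hCLCH := by norm_num
    hCLDL := by norm_num, hDLD := by norm_num, hDT := by norm_num }

/-- The example task system: `τ1` is HC, `τ2` is LC. -/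
noncomputable def exSys : Fin 2 → Task := ![exTask1, exTask2]

/-- Criticality labels of the example system. -/
def exHC : Fin 2 → Bool := ![true, false]

/-! Since `D₁ = D₁^L`, the HC task `τ₁` is never in case 1, so `U = {τ₂}`. In case 3 the
improved bound is at most `t₁ + dbf₁^H(t₂ - t₁) ≤ t₂`. In case 2, write `t₂ - t₁ = 6k + r`: then
`dbf₁^H(t₂ - t₁) = 2k`, and for `k ≥ 1` the high-criticality part `2k + CO₁ + 1 ≤ 6k` fits into
`t₂ - t₁`; for `k = 0` we have `t₂ ≥ 4`, and the low-criticality branch of the minimum gives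
`I ≤ 3 + (t₁ + 2)/7 + (t₂ - 4)/6 ≤ t₂`. -/

lemma MOD_nonneg (t : ℝ) {T : ℝ} (hT : 0 < T) : 0 ≤ MOD t T :=
  Int.sub_floor_div_mul_nonneg t hT

lemma floor_mul_add_MOD (t T : ℝ) : (⌊t / T⌋ : ℝ) * T + MOD t T = t := by
  unfold MOD; ring

lemma max_zero_floor_succ_mul_le {x d T C : ℝ} (hT : 0 < T) (hC : 0 ≤ C) (hx : d - T ≤ x) :
    max 0 (((⌊(x - d) / T⌋ : ℝ) + 1) * C) ≤ (x - d + T) / T * C := by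
  have hfloor : (⌊(x - d) / T⌋ : ℝ) + 1 ≤ (x - d + T) / T := by
    have := Int.floor_le ((x - d) / T)
    rw [add_div, div_self hT.ne']
    linarith
  refine max_le (mul_nonneg (div_nonneg (by linarith) hT.le) hC) ?_
  exact mul_le_mul_of_nonneg_right hfloor hC

namespace Task

variable (τ : Task)

lemma dbfL_le {t : ℝ} (ht : 0 ≤ t) : dbfL τ t ≤ (t - τ.DL + τ.T) / τ.T * τ.CL :=
  max_zero_floor_succ_mul_le τ.hT τ.hCL.le (by linarith [τ.hDLD, τ.hDT])

lemma dbfH_le {t : ℝ} (ht : 0 ≤ t) : dbfH τ t ≤ (t - τ.D + τ.T) / τ.T * τ.CH :=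
  max_zero_floor_succ_mul_le τ.hT (τ.hCL.le.trans τ.hCLCH) (by linarith [τ.hDT])

lemma dbfH_eq_zero_of_lt_D {t : ℝ} (ht : t < τ.D) : dbfH τ t = 0 := by
  have hfloor : ⌊(t - τ.D) / τ.T⌋ < 0 :=
    Int.floor_lt_zero.mpr (div_neg_of_neg_of_pos (by linarith) τ.hT)
  have hfloor' : (⌊(t - τ.D) / τ.T⌋ : ℝ) + 1 ≤ 0 := by
    exact_mod_cast Int.add_one_le_iff.mpr hfloor
  exact max_eq_left (mul_nonpos_of_nonpos_of_nonneg hfloor' (τ.hCL.le.trans τ.hCLCH))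

lemma floor_sub_D_div_eq {t : ℝ} (hmod : MOD t τ.T < τ.D) :
    ⌊(t - τ.D) / τ.T⌋ = ⌊t / τ.T⌋ - 1 := by
  have hsplit := floor_mul_add_MOD t τ.T
  have hrem := MOD_nonneg t τ.hT
  rw [Int.floor_eq_iff, le_div_iff₀ τ.hT, div_lt_iff₀ τ.hT]
  push_cast
  constructor <;> nlinarith [τ.hDT]

lemma dbfH_eq_of_MOD_lt_D {t : ℝ} (ht : 0 ≤ t) (hmod : MOD t τ.T < τ.D) :
    dbfH τ t = (⌊t / τ.T⌋ : ℝ) * τ.CH := by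
  have hk : (0 : ℝ) ≤ ⌊t / τ.T⌋ := by
    exact_mod_cast Int.floor_nonneg.mpr (div_nonneg ht τ.hT.le)
  rw [dbfH, floor_sub_D_div_eq τ hmod]
  push_cast
  rw [sub_add_cancel]
  exact max_eq_right (mul_nonneg hk (τ.hCL.le.trans τ.hCLCH))

lemma dbfL2_le_of_MOD_lt_D {t1 t2 : ℝ} (h12 : t1 ≤ t2) (hmod : MOD (t2 - t1) τ.T < τ.D)
    (ht2 : τ.D ≤ t2) : dbfL2 τ t1 t2 ≤ (t2 - τ.D) / τ.T * τ.CL := by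
  have hk : (0 : ℝ) ≤ ⌊(t2 - t1) / τ.T⌋ := by
    exact_mod_cast Int.floor_nonneg.mpr (div_nonneg (sub_nonneg.mpr h12) τ.hT.le)
  have hfloor := Int.floor_le ((t2 - τ.D) / τ.T)
  rw [dbfL2, floor_sub_D_div_eq τ hmod]
  push_cast
  refine mul_le_mul_of_nonneg_right (max_le (div_nonneg (by linarith) τ.hT.le) ?_) τ.hCL.le
  linarith

lemma dbfUN_le_CL (t1 t2 : ℝ) : dbfUN τ t1 t2 ≤ τ.CL := by
  unfold dbfUN
  split_ifs
  exacts [min_le_left _ _, τ.hCL.le]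

lemma CO_le_CL (t : ℝ) : CO τ t ≤ τ.CL := min_le_left _ _

lemma not_case1_of_DL_eq_D (hDL : τ.DL = τ.D) {t1 t2 : ℝ} (h12 : t1 < t2) :
    ¬ case1 τ t1 t2 := by
  rw [case1, hDL, sub_self, not_le, sub_pos]
  exact h12

end Task

lemma dbfUNtot_le_sum {n : ℕ} (τ : Fin n → Task) (hc : Fin n → Bool) (t1 t2 : ℝ) :
    dbfUNtot τ hc t1 t2 ≤ ∑ i ∈ Uset τ hc t1 t2, dbfUN (τ i) t1 t2 := by
  unfold dbfUNtot
  split_ifs with hU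
  · exact min_le_right _ _
  · rw [not_nonempty_iff_eq_empty.mp hU, sum_empty]

@[simp] lemma exSys_zero : exSys 0 = exTask1 := rfl

@[simp] lemma exSys_one : exSys 1 = exTask2 := rfl

lemma Etest_exSys_one : Etest exSys exHC 1 = 2 := by
  have hmod : MOD 1 6 = 1 := by unfold MOD; norm_num
  have hHC : univ.filter (fun i : Fin 2 => exHC i = true) = {0} := by
    ext i; fin_cases i <;> simp only [mem_filter] <;> simp [exHC]
  have hS : Sset exSys exHC 1 = {0} := by
    ext i; fin_cases i <;> simp only [Sset, mem_filter] <;> simp [exHC, exTask1, hmod]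
  have hdbfH : dbfH exTask1 1 = 0 := exTask1.dbfH_eq_zero_of_lt_D (by norm_num [exTask1])
  have hCO : CO exTask1 1 = 1 := by norm_num [CO, exTask1, hmod]
  rw [Etest, hHC, hS, sum_singleton, sum_singleton]
  change dbfH exTask1 1 + (exTask1.CH - exTask1.CL + CO exTask1 1) = 2
  rw [hdbfH, hCO]
  norm_num [exTask1]

lemma dbfH_exTask1_le_self {d : ℝ} (hd : 0 ≤ d) : dbfH exTask1 d ≤ d := by
  rcases lt_or_ge d exTask1.D with hlt | hge
  · rw [exTask1.dbfH_eq_zero_of_lt_D hlt]; exact hd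
  · have := exTask1.dbfH_le hd
    norm_num [exTask1] at this hge ⊢
    linarith

lemma Uset_exSys {t1 t2 : ℝ} (h12 : t1 < t2) : Uset exSys exHC t1 t2 = {1} := by
  have := exTask1.not_case1_of_DL_eq_D rfl h12
  ext i; fin_cases i <;> simp only [Uset, mem_filter] <;> simp [exHC, this]

lemma dbfUNtot_add_dbfL_exSys_le {t1 t2 : ℝ} (h0 : 0 ≤ t1) (h12 : t1 < t2) :
    dbfUNtot exSys exHC t1 t2 + dbfL exTask2 t1 ≤ 1 + (t1 + 2) / 7 := by
  have hUN := dbfUNtot_le_sum exSys exHC t1 t2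
  rw [Uset_exSys h12, sum_singleton, exSys_one] at hUN
  have hUN' : dbfUN exTask2 t1 t2 ≤ 1 := exTask2.dbfUN_le_CL t1 t2
  have hL : dbfL exTask2 t1 ≤ (t1 - 5 + 7) / 7 * 1 := exTask2.dbfL_le h0
  linarith

lemma Itest_exSys_le_of_not_case2 {t1 t2 : ℝ} (h12 : t1 < t2) (h2 : ¬ case2 exTask1 t1 t2) :
    Itest exSys exHC t1 t2 ≤ t2 := by
  have h3 : case3 exTask1 t1 t2 := ⟨exTask1.not_case1_of_DL_eq_D rfl h12, h2⟩
  have hH2 : H2set exSys exHC t1 t2 = ∅ := by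
    ext i; fin_cases i <;> simp only [H2set, mem_filter] <;> simp [exHC, h2]
  have hH3 : H3set exSys exHC t1 t2 = {0} := by
    ext i; fin_cases i <;> simp only [H3set, mem_filter] <;> simp [exHC, h3]
  rw [Itest, hH2, hH3]
  simp only [sum_singleton, sum_empty, zero_add, add_zero, exSys_zero]
  have hH := dbfH_exTask1_le_self (sub_nonneg.mpr h12.le)
  linarith [min_le_left t1 (dbfL1tot exSys exHC t1 t2 + dbfL2tot exSys exHC t1 t2 +
    dbfL3tot exSys exHC t1 t2)]

lemma Itest_exSys_le_of_case2 {t1 t2 : ℝ} (h0 : 0 ≤ t1) (h12 : t1 < t2)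
    (h2 : case2 exTask1 t1 t2) : Itest exSys exHC t1 t2 ≤ t2 := by
  have hH2 : H2set exSys exHC t1 t2 = {0} := by
    ext i; fin_cases i <;> simp only [H2set, mem_filter] <;> simp [exHC, h2]
  have hH3 : H3set exSys exHC t1 t2 = ∅ := by
    ext i; fin_cases i <;> simp only [H3set, mem_filter] <;> simp [exHC, case3, h2]
  rw [Itest, dbfL1tot, dbfL2tot, dbfL3tot, Uset_exSys h12, hH2, hH3]
  simp only [sum_singleton, sum_empty, add_zero, exSys_zero, exSys_one]
  obtain ⟨-, hmod, hlast⟩ := h2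
  have hδ : 0 ≤ t2 - t1 := by linarith
  set A := dbfUNtot exSys exHC t1 t2 + dbfL exTask2 t1 +
    (dbfL2 exTask1 t1 t2 + 1 - CO exTask1 (t2 - t1))
  change min t1 A + dbfH exTask1 (t2 - t1) + (CO exTask1 (t2 - t1) + 2 - 1) ≤ t2
  have hH : dbfH exTask1 (t2 - t1) = (⌊(t2 - t1) / 6⌋ : ℝ) * 2 :=
    exTask1.dbfH_eq_of_MOD_lt_D hδ hmod
  have hsplit : (⌊(t2 - t1) / 6⌋ : ℝ) * 6 + MOD (t2 - t1) 6 = t2 - t1 :=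
    floor_mul_add_MOD (t2 - t1) 6
  have hrem : 0 ≤ MOD (t2 - t1) 6 := MOD_nonneg (t2 - t1) (by norm_num)
  have hCO : CO exTask1 (t2 - t1) ≤ 1 := exTask1.CO_le_CL (t2 - t1)
  have hk : 0 ≤ ⌊(t2 - t1) / 6⌋ := Int.floor_nonneg.mpr (by positivity)
  obtain hk0 | hk1 : ⌊(t2 - t1) / 6⌋ = 0 ∨ 1 ≤ ⌊(t2 - t1) / 6⌋ := by omega
  · have ht2 : (4 : ℝ) ≤ t2 := by
      have : (⌊(t2 - t1) / 6⌋ : ℝ) * 6 + 4 ≤ t2 := hlast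
      simpa [hk0] using this
    have hL2 : dbfL2 exTask1 t1 t2 ≤ (t2 - 4) / 6 * 1 :=
      exTask1.dbfL2_le_of_MOD_lt_D h12.le hmod ht2
    have hLC := dbfUNtot_add_dbfL_exSys_le h0 h12
    rw [hH, hk0, Int.cast_zero]
    linarith [min_le_right t1 A]
  · have hk1' : (1 : ℝ) ≤ ⌊(t2 - t1) / 6⌋ := by exact_mod_cast hk1
    rw [hH]
    linarith [min_le_left t1 A]

/-- Example 1 of the paper. For the system with HC task
`τ1 = (6,4, C^L=1, C^H=2)` and LC task `τ2 = (7,5, C=1)` with tightened deadlines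
equal to real deadlines: (i) the existing test fails at `t = 1` since `E(1) = 2 > 1`;
(ii) the improved test holds everywhere, `I(t1,t2) ≤ t2` for all `0 ≤ t1 < t2`.
Hence the improved test strictly dominates the existing test. -/
theorem strict_dominance_example :
    Etest exSys exHC 1 = 2 ∧ (1 : ℝ) < Etest exSys exHC 1 ∧
      ∀ t1 t2 : ℝ, 0 ≤ t1 → t1 < t2 → Itest exSys exHC t1 t2 ≤ t2 := by
  refine ⟨Etest_exSys_one, by norm_num [Etest_exSys_one], fun t1 t2 h0 h12 => ?_⟩
  by_cases h2 : case2 exTask1 t1 t2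
  · exact Itest_exSys_le_of_case2 h0 h12 h2
  · exact Itest_exSys_le_of_not_case2 h12 h2

end MC
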